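/- arXiv:2102.08571 — 2 statements merged into one kernel-verified Lean document; each statement's English description precedes it below -/
import Mathlib

section
/- The optimized-lookahead Bellman operator T_O is a contraction with constant β with respect to the sup norm: for all v, w : X → ℝ, ‖T_O v − T_O w‖ ≤ β · ‖v − w‖. -/
open scoped BigOperators

/-- Expectation of `f` under a probability mass function `p` on a finite type. -/
noncomputable def expect {X : Type*} [Fintype X] (p : PMF X) (f : X → ℝ) : ℝ :=
  ∑ y, (p y).toReal * f y

/-- The classic Bellman operator `(T v)(x) = min_a ( c(x,a) + β · E_{y∼P(x,a)}[v(y)] )`. -/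
noncomputable def bellman {X A : Type*} [Fintype X] [Fintype A]
    (P : X → A → PMF X) (c : X × A → ℝ) (β : ℝ) (v : X → ℝ) : X → ℝ :=
  fun x => ⨅ a : A, (c (x, a) + β * expect (P x a) v)

/-- The skip kernel: distribution of the state after `t` steps from `x`, holding action `a`. -/
noncomputable def skip {X A : Type*} (P : X → A → PMF X) (x : X) (a : A) : ℕ → PMF X
  | 0 => PMF.pure x
  | t + 1 => (skip P x a t).bind fun y => P y a

/-- The consolidated cost `c̄(x,a,Δt) = ∑_{t=0}^{Δt−1} β^t · E_{y∼P̄(x,a,t)}[c(y,a)]`. -/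
noncomputable def cbar {X A : Type*} [Fintype X]
    (P : X → A → PMF X) (c : X × A → ℝ) (β : ℝ) (x : X) (a : A) (Δt : ℕ) : ℝ :=
  ∑ t ∈ Finset.range Δt, β ^ t * expect (skip P x a t) (fun y => c (y, a))

/-- The optimized-lookahead Bellman operator
`(T_O v)(x) = min_{a, 1 ≤ Δt ≤ T̄} ( c̄(x,a,Δt) + β^Δt ( O + E_{y∼P̄(x,a,Δt)}[v(y)] ) )`. -/
noncomputable def TO {X A : Type*} [Fintype X] [Fintype A]
    (P : X → A → PMF X) (c : X × A → ℝ) (β O : ℝ) (Tb : ℕ) (v : X → ℝ) : X → ℝ :=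
  fun x => ⨅ a : A, ⨅ Δt : {n : ℕ // n ∈ Finset.Icc 1 Tb},
    (cbar P c β x a Δt.val + β ^ Δt.val * (O + expect (skip P x a Δt.val) v))

/-- The evaluation operator of a stationary self-triggering policy `μ = (π, τ)`. -/
noncomputable def Tpol {X A : Type*} [Fintype X]
    (P : X → A → PMF X) (c : X × A → ℝ) (β O : ℝ)
    (π : X → A) (τ : X → ℕ) (v : X → ℝ) : X → ℝ :=
  fun x => cbar P c β x (π x) (τ x) + β ^ (τ x) * (O + expect (skip P x (π x) (τ x)) v)

lemma expect_sum_one {X : Type*} [Fintype X] (p : PMF X) :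
    ∑ y, (p y).toReal = 1 := by
  have h := p.tsum_coe
  rw [tsum_fintype] at h
  rw [← ENNReal.toReal_sum (fun y _ => p.apply_ne_top y), h, ENNReal.toReal_one]

lemma abs_expect_sub_le {X : Type*} [Fintype X] (p : PMF X) (v w : X → ℝ) :
    |expect p v - expect p w| ≤ ‖v - w‖ := by
  rw [expect, expect, ← Finset.sum_sub_distrib]
  calc |∑ y, ((p y).toReal * v y - (p y).toReal * w y)|
      ≤ ∑ y, |(p y).toReal * v y - (p y).toReal * w y| := Finset.abs_sum_le_sum_abs _ _
    _ ≤ ∑ y, (p y).toReal * ‖v - w‖ := by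
        apply Finset.sum_le_sum
        intro y _
        rw [← mul_sub, abs_mul, abs_of_nonneg ENNReal.toReal_nonneg]
        apply mul_le_mul_of_nonneg_left _ ENNReal.toReal_nonneg
        have hb := norm_le_pi_norm (v - w) y
        simp only [Pi.sub_apply, Real.norm_eq_abs] at hb
        first
        | exact hb
        | (rw [abs_sub_comm]; exact hb)
    _ = ‖v - w‖ := by rw [← Finset.sum_mul, expect_sum_one, one_mul]

lemma abs_ciInf_sub_ciInf {ι : Type*} [Fintype ι] [Nonempty ι] (f g : ι → ℝ) (ε : ℝ)
    (h : ∀ i, |f i - g i| ≤ ε) : |(⨅ i, f i) - ⨅ i, g i| ≤ ε := by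
  rw [abs_sub_le_iff]
  constructor
  · obtain ⟨i0, hi0⟩ := exists_eq_ciInf_of_finite (f := g)
    have h1 : (⨅ i, f i) ≤ f i0 := ciInf_le (Set.Finite.bddBelow (Set.finite_range f)) i0
    have h2 := (abs_sub_le_iff.mp (h i0)).1
    linarith [h1, h2, hi0.le, hi0.ge]
  · obtain ⟨i0, hi0⟩ := exists_eq_ciInf_of_finite (f := f)
    have h1 : (⨅ i, g i) ≤ g i0 := ciInf_le (Set.Finite.bddBelow (Set.finite_range g)) i0
    have h2 := (abs_sub_le_iff.mp (h i0)).2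
    linarith [h1, h2, hi0.le, hi0.ge]

theorem TO_contraction {X A : Type*} [Fintype X] [Nonempty X] [Fintype A] [Nonempty A]
    (P : X → A → PMF X) (c : X × A → ℝ) (hc : ∀ (x : X) (a : A), 0 ≤ c (x, a))
    (β : ℝ) (hβ0 : 0 ≤ β) (hβ1 : β < 1)
    (O : ℝ) (hO : 0 ≤ O) (Tb : ℕ) (hTb : 1 ≤ Tb) :
    ∀ v w : X → ℝ, ‖TO P c β O Tb v - TO P c β O Tb w‖ ≤ β * ‖v - w‖ := by
  intro v w
  have hne : Nonempty {n : ℕ // n ∈ Finset.Icc 1 Tb} :=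
    ⟨⟨1, by simp [Finset.mem_Icc, hTb]⟩⟩
  have hβC : 0 ≤ β * ‖v - w‖ := mul_nonneg hβ0 (norm_nonneg _)
  rw [pi_norm_le_iff_of_nonneg hβC]
  intro x
  show |TO P c β O Tb v x - TO P c β O Tb w x| ≤ β * ‖v - w‖
  unfold TO
  apply abs_ciInf_sub_ciInf
  intro a
  apply abs_ciInf_sub_ciInf
  intro Δt
  have hΔ : 1 ≤ Δt.val := (Finset.mem_Icc.mp Δt.2).1
  have key : |expect (skip P x a Δt.val) v - expect (skip P x a Δt.val) w| ≤ ‖v - w‖ :=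
    abs_expect_sub_le _ _ _
  have hpow : β ^ Δt.val ≤ β := by
    calc β ^ Δt.val ≤ β ^ 1 := pow_le_pow_of_le_one hβ0 hβ1.le hΔ
      _ = β := pow_one β
  have hpow0 : 0 ≤ β ^ Δt.val := pow_nonneg hβ0 _
  have : cbar P c β x a Δt.val + β ^ Δt.val * (O + expect (skip P x a Δt.val) v)
      - (cbar P c β x a Δt.val + β ^ Δt.val * (O + expect (skip P x a Δt.val) w))
      = β ^ Δt.val * (expect (skip P x a Δt.val) v - expect (skip P x a Δt.val) w) := by ring
  rw [this, abs_mul, abs_of_nonneg hpow0]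
  calc β ^ Δt.val * |expect (skip P x a Δt.val) v - expect (skip P x a Δt.val) w|
      ≤ β ^ Δt.val * ‖v - w‖ := mul_le_mul_of_nonneg_left key hpow0
    _ ≤ β * ‖v - w‖ := mul_le_mul_of_nonneg_right hpow (norm_nonneg _)
end

section
/- A policy attaining the pointwise minimum in the dynamic programming equation with optimized lookahead is optimal: if V_st is the unique fixed point of T_O and μ* = (π*, τ*) is a stationary self-triggering policy such that V_st(x) = c̄(x, π*(x), τ*(x)) + β^{τ*(x)} · ( O + E_{y∼P̄(x, π*(x), τ*(x))}[V_st(y)] ) for all x ∈ X, then the evaluation fixed point f^{μ*} of T_{μ*} equals V_st, and f^{μ*}(x) ≤ f^{μ}(x) for every stationary self-triggering policy μ and every x ∈ X. -/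
/-!
Both claims follow from one comparison principle for the evaluation operator `T_μ`: since every
timing is at least one step, `T_μ u - T_μ v = β^τ · E[u - v]` contracts the largest gap `u - v`
by a factor `β^τ < 1`, so a subsolution `u ≤ T_μ u` lies below the fixed point of `T_μ`.
The attaining property makes `V_st` a fixed point of `T_{μ*}`, whence `f^{μ*} = V_st`; and
`V_st = T_O V_st ≤ T_μ V_st` makes `V_st` a subsolution for every admissible `μ`.
-/

open scoped BigOperators

section Expectation

variable {X : Type*} [Fintype X]

lemma PMF.sum_toReal_eq_one (p : PMF X) : ∑ y, (p y).toReal = 1 := by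
  rw [← ENNReal.toReal_sum fun y _ => p.apply_ne_top y,
    ← tsum_fintype (L := SummationFilter.unconditional _), p.tsum_coe, ENNReal.toReal_one]

lemma expect_le_of_le (p : PMF X) {f : X → ℝ} {M : ℝ} (h : ∀ y, f y ≤ M) :
    expect p f ≤ M :=
  calc expect p f ≤ ∑ y, (p y).toReal * M :=
        Finset.sum_le_sum fun y _ => mul_le_mul_of_nonneg_left (h y) ENNReal.toReal_nonneg
    _ = M := by rw [← Finset.sum_mul, p.sum_toReal_eq_one, one_mul]

lemma expect_sub (p : PMF X) (f g : X → ℝ) :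
    expect p f - expect p g = expect p (f - g) := by
  simp only [expect, Pi.sub_apply, mul_sub, Finset.sum_sub_distrib]

end Expectation

section PolicyEvaluation

variable {X A : Type*} [Fintype X] (P : X → A → PMF X) (c : X × A → ℝ) (β O : ℝ)
  (π : X → A) (τ : X → ℕ)

lemma Tpol_sub (u v : X → ℝ) (x : X) :
    Tpol P c β O π τ u x - Tpol P c β O π τ v x =
      β ^ τ x * expect (skip P x (π x) (τ x)) (u - v) := by
  simp only [Tpol, ← expect_sub]
  ring

variable {β}

lemma le_of_le_Tpol_of_Tpol_eq (hβ0 : 0 ≤ β) (hβ1 : β < 1) (hτ : ∀ x, 1 ≤ τ x)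
    {u v : X → ℝ} (hu : ∀ x, u x ≤ Tpol P c β O π τ u x) (hv : Tpol P c β O π τ v = v)
    (x : X) : u x ≤ v x := by
  by_contra! hx
  have : Nonempty X := ⟨x⟩
  obtain ⟨m, hm⟩ := Finite.exists_max (u - v)
  have hgap : 0 < u m - v m := (sub_pos.mpr hx).trans_le (hm x)
  have hcontract : β ^ τ m < 1 := pow_lt_one₀ hβ0 hβ1 (Nat.one_le_iff_ne_zero.mp (hτ m))
  have hstep : u m - v m ≤ β ^ τ m * (u m - v m) :=
    calc u m - v m ≤ Tpol P c β O π τ u m - Tpol P c β O π τ v m := by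
          rw [congrFun hv m]; exact sub_le_sub_right (hu m) _
      _ = β ^ τ m * expect (skip P m (π m) (τ m)) (u - v) := Tpol_sub P c β O π τ u v m
      _ ≤ β ^ τ m * (u m - v m) :=
          mul_le_mul_of_nonneg_left (expect_le_of_le _ hm) (pow_nonneg hβ0 _)
  nlinarith

end PolicyEvaluation

lemma TO_le_Tpol {X A : Type*} [Fintype X] [Fintype A] (P : X → A → PMF X) (c : X × A → ℝ)
    (β O : ℝ) {Tb : ℕ} (π : X → A) {τ : X → ℕ} (hτ : ∀ x, 1 ≤ τ x ∧ τ x ≤ Tb) (v : X → ℝ)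
    (x : X) : TO P c β O Tb v x ≤ Tpol P c β O π τ v x :=
  (ciInf_le (Finite.bddBelow_range _) (π x)).trans <|
    ciInf_le (Finite.bddBelow_range _)
      (⟨τ x, Finset.mem_Icc.mpr (hτ x)⟩ : {n : ℕ // n ∈ Finset.Icc 1 Tb})

theorem attaining_policy_is_optimal_general {X A : Type*} [Fintype X] [Fintype A]
    (P : X → A → PMF X) (c : X × A → ℝ)
    (β : ℝ) (hβ0 : 0 ≤ β) (hβ1 : β < 1)
    (O : ℝ) (Tb : ℕ)
    (Vst : X → ℝ) (hVst : TO P c β O Tb Vst = Vst)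
    (πs : X → A) (τs : X → ℕ) (hτs : ∀ x : X, 1 ≤ τs x ∧ τs x ≤ Tb)
    (hmin : ∀ x : X, Vst x = cbar P c β x (πs x) (τs x) +
      β ^ (τs x) * (O + expect (skip P x (πs x) (τs x)) Vst))
    (fs : X → ℝ) (hfs : Tpol P c β O πs τs fs = fs) :
    fs = Vst ∧ ∀ (π : X → A) (τ : X → ℕ), (∀ x : X, 1 ≤ τ x ∧ τ x ≤ Tb) →
      ∀ fμ : X → ℝ, Tpol P c β O π τ fμ = fμ → ∀ x : X, fs x ≤ fμ x := by
  have hτs1 : ∀ x, 1 ≤ τs x := fun x => (hτs x).1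
  have hVst_fixed : Tpol P c β O πs τs Vst = Vst := funext fun x => (hmin x).symm
  have hfs_eq : fs = Vst := funext fun x => le_antisymm
    (le_of_le_Tpol_of_Tpol_eq P c O πs τs hβ0 hβ1 hτs1 (congrFun hfs · |>.ge) hVst_fixed x)
    (le_of_le_Tpol_of_Tpol_eq P c O πs τs hβ0 hβ1 hτs1 (congrFun hVst_fixed · |>.ge) hfs x)
  refine ⟨hfs_eq, fun π τ hτ fμ hfμ x => hfs_eq ▸ ?_⟩
  have hVst_sub : ∀ z, Vst z ≤ Tpol P c β O π τ Vst z := fun z =>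
    (congrFun hVst z).ge.trans (TO_le_Tpol P c β O π hτ Vst z)
  exact le_of_le_Tpol_of_Tpol_eq P c O π τ hβ0 hβ1 (fun z => (hτ z).1) hVst_sub hfμ x

theorem attaining_policy_is_optimal {X A : Type*} [Fintype X] [Nonempty X] [Fintype A] [Nonempty A]
    (P : X → A → PMF X) (c : X × A → ℝ) (hc : ∀ (x : X) (a : A), 0 ≤ c (x, a))
    (β : ℝ) (hβ0 : 0 ≤ β) (hβ1 : β < 1)
    (O : ℝ) (hO : 0 ≤ O) (Tb : ℕ) (hTb : 1 ≤ Tb)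
    (Vst : X → ℝ) (hVst : TO P c β O Tb Vst = Vst)
    (πs : X → A) (τs : X → ℕ) (hτs : ∀ x : X, 1 ≤ τs x ∧ τs x ≤ Tb)
    (hmin : ∀ x : X, Vst x = cbar P c β x (πs x) (τs x) +
      β ^ (τs x) * (O + expect (skip P x (πs x) (τs x)) Vst))
    (fs : X → ℝ) (hfs : Tpol P c β O πs τs fs = fs) :
    fs = Vst ∧ ∀ (π : X → A) (τ : X → ℕ), (∀ x : X, 1 ≤ τ x ∧ τ x ≤ Tb) →
      ∀ fμ : X → ℝ, Tpol P c β O π τ fμ = fμ → ∀ x : X, fs x ≤ fμ x :=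
  attaining_policy_is_optimal_general P c β hβ0 hβ1 O Tb Vst hVst πs τs hτs hmin fs hfs
end
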